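/- arXiv:0710.1623 — 2 statements merged into one kernel-verified Lean document; each statement's English description precedes it below -/
import Mathlib

section
/- Let P(x) be a monic polynomial of degree m over C and suppose P(x)^2 + 1 factors as ∏_{i=1}^{k} (x - x_i)^{m_i} with distinct roots x_1,...,x_k and multiplicities m_i ≥ 1. Then the number of distinct roots satisfies k ≥ m + 1. -/
/-!
A root `xᵢ` of `P² + 1` of multiplicity `mᵢ` is a root of `(P² + 1)' = 2 P P'` of multiplicity
at least `mᵢ - 1`, and it is not a root of `P`, since `P` and `P² + 1` are coprime. Hence
`∏ (X - xᵢ)^(mᵢ - 1)` divides `P' ≠ 0`, and comparing degrees, with `∑ mᵢ = 2m`, gives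
`2m - k ≤ ∑ (mᵢ - 1) ≤ m - 1`.
-/

open Polynomial Finset

theorem isCoprime_sq_add_of_isUnit {R : Type*} [CommRing R] (a : R) {u : R} (hu : IsUnit u) :
    IsCoprime a (a ^ 2 + u) := by
  have hau : IsCoprime a u := by
    simpa using (isCoprime_mul_unit_right_right hu a 1).mpr isCoprime_one_right
  simpa [sq, add_comm] using hau.add_mul_left_right a

theorem Finset.sum_le_sum_sub_one_add_card {ι : Type*} (s : Finset ι) (n : ι → ℕ) :
    ∑ i ∈ s, n i ≤ ∑ i ∈ s, (n i - 1) + #s := by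
  rw [card_eq_sum_ones, ← sum_add_distrib]
  exact sum_le_sum fun i _ => by omega

namespace Polynomial

variable {K : Type*} [Field K]

theorem natDegree_prod_X_sub_C_pow {ι : Type*} (s : Finset ι) (x : ι → K) (n : ι → ℕ) :
    (∏ i ∈ s, (X - C (x i)) ^ n i).natDegree = ∑ i ∈ s, n i := by
  rw [natDegree_prod_of_monic _ _ fun i _ => (monic_X_sub_C (x i)).pow (n i)]
  simp only [natDegree_pow, natDegree_X_sub_C, mul_one]

theorem pow_sub_one_dvd_derivative_of_pow_dvd_sq_add_C [NeZero (2 : K)] {P q : K[X]} {c : K}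
    {n : ℕ} (hc : c ≠ 0) (h : q ^ n ∣ P ^ 2 + C c) : q ^ (n - 1) ∣ derivative P := by
  have hcop : IsCoprime (q ^ (n - 1)) P :=
    ((isCoprime_sq_add_of_isUnit P (isUnit_C.mpr hc.isUnit)).of_isCoprime_of_dvd_right
      ((pow_dvd_pow q (n.sub_le 1)).trans h)).symm
  have hderiv : derivative (P ^ 2 + C c) = P * (C 2 * derivative P) := by
    rw [derivative_add, derivative_C, add_zero, derivative_sq, C_ofNat]
    ring
  have h2P' : q ^ (n - 1) ∣ C 2 * derivative P :=
    hcop.dvd_of_dvd_mul_left (hderiv ▸ pow_sub_one_dvd_derivative_of_pow_dvd h)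
  exact (isUnit_C.mpr (two_ne_zero' K).isUnit).dvd_mul_left.mp h2P'

theorem prod_pow_sub_one_dvd_derivative_of_sq_add_C_eq_prod [NeZero (2 : K)] {ι : Type*}
    [Fintype ι] {P : K[X]} {c : K} {x : ι → K} {n : ι → ℕ} (hc : c ≠ 0)
    (hx : Function.Injective x) (h : P ^ 2 + C c = ∏ i, (X - C (x i)) ^ n i) :
    ∏ i, (X - C (x i)) ^ (n i - 1) ∣ derivative P :=
  Fintype.prod_dvd_of_coprime (fun _ _ hij => (pairwise_coprime_X_sub_C hx hij).pow)
    fun i => pow_sub_one_dvd_derivative_of_pow_dvd_sq_add_C hc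
      (h ▸ Finset.dvd_prod_of_mem _ (mem_univ i))

end Polynomial

theorem stmt2_general (m k : ℕ) (hm : 1 ≤ m) (P : Polynomial ℂ)
    (hdeg : P.natDegree = m) (x : Fin k → ℂ) (mi : Fin k → ℕ)
    (hx : Function.Injective x)
    (hfac : P ^ 2 + 1 = ∏ i, (X - C (x i)) ^ mi i) :
    m + 1 ≤ k := by
  rw [← C_1] at hfac
  have hsum : ∑ i, mi i = 2 * m := by
    rw [← natDegree_prod_X_sub_C_pow univ x, ← hfac, natDegree_add_C, natDegree_pow, hdeg]
  have hle : ∑ i, (mi i - 1) ≤ m - 1 :=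
    calc ∑ i, (mi i - 1) = (∏ i, (X - C (x i)) ^ (mi i - 1)).natDegree :=
          (natDegree_prod_X_sub_C_pow _ _ _).symm
      _ ≤ (derivative P).natDegree :=
          natDegree_le_of_dvd
            (prod_pow_sub_one_dvd_derivative_of_sq_add_C_eq_prod one_ne_zero hx hfac)
            (derivative_ne_zero.mpr (by omega))
      _ ≤ m - 1 := hdeg ▸ natDegree_derivative_le P
  have hcard := sum_le_sum_sub_one_add_card univ mi
  rw [card_univ, Fintype.card_fin] at hcard
  omega

/-- If P is monic of degree m over ℂ and P^2 + 1 = ∏ (x - x_i)^{m_i} with distinct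
roots x_i and multiplicities m_i ≥ 1, then the number k of distinct roots satisfies
k ≥ m + 1. -/
theorem stmt2 (m k : ℕ) (hm : 1 ≤ m) (P : Polynomial ℂ) (hP : P.Monic)
    (hdeg : P.natDegree = m) (x : Fin k → ℂ) (mi : Fin k → ℕ)
    (hx : Function.Injective x) (hmi : ∀ i, 1 ≤ mi i)
    (hfac : P ^ 2 + 1 = ∏ i, (X - C (x i)) ^ mi i) :
    m + 1 ≤ k :=
  stmt2_general m k hm P hdeg x mi hx hfac
end

section
/- Let P(x) = x^m + (1/2)x^{m-2} + lower order terms be a polynomial over C, λ ≠ 0 a complex number, and suppose P(x)^2 + λ = Q(x)^2 S(x) where Q is monic of degree m-1 with distinct roots and S is a monic quadratic. If R(x) is a polynomial of degree at most m-3 and λ' ∈ C are such that Q(x) divides 2P(x)R(x) + λ', then R = 0 and λ' = 0. -/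
/-!
Squaring `Q ∣ 2PR + λ'` and eliminating `P²` through `P² + λ = Q²S` gives
`Q² ∣ λ'² + 4λ'PR - 4λR²`, a polynomial of degree below `deg Q² = 2m - 2`, hence zero.
Its coefficient of `x ^ (deg P + deg R)` is `4λ'` times a nonzero leading term, so `λ' = 0`,
and then `4λR² = 0` with `λ ≠ 0` gives `R = 0`.
-/

open Polynomial

theorem sq_dvd_of_dvd_two_mul_mul_add {A : Type*} [CommRing A] {P Q S R a b : A}
    (hfac : P ^ 2 + a = Q ^ 2 * S) (hdvd : Q ∣ 2 * P * R + b) :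
    Q ^ 2 ∣ b ^ 2 + 4 * b * (P * R) - 4 * a * R ^ 2 := by
  have hsq : b ^ 2 + 4 * b * (P * R) - 4 * a * R ^ 2
      = (2 * P * R + b) ^ 2 - Q ^ 2 * (4 * S * R ^ 2) := by
    linear_combination (-4 * R ^ 2) * hfac
  rw [hsq]
  exact (pow_dvd_pow_of_dvd hdvd 2).sub (dvd_mul_right _ _)

namespace Polynomial

variable {K : Type*}

theorem natDegree_sq_add_mul_sub_lt [CommRing K] {P R : K[X]} {a b : K} {m : ℕ}
    (hm : 2 ≤ m) (hP : P.natDegree = m) (hR : R.degree < ↑(m - 2)) :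
    (C b ^ 2 + 4 * C b * (P * R) - 4 * C a * R ^ 2).natDegree < 2 * (m - 1) := by
  obtain rfl | hR0 := eq_or_ne R 0
  · simp only [mul_zero, zero_pow two_ne_zero, sub_zero, add_zero, ← C_pow, natDegree_C]
    omega
  have hRm : R.natDegree + 3 ≤ m := by
    have := (natDegree_lt_iff_degree_lt hR0).2 hR
    omega
  have hE : (C b ^ 2 + 4 * C b * (P * R) - 4 * C a * R ^ 2).natDegree
      ≤ max (P.natDegree + R.natDegree) (2 * R.natDegree) := by
    compute_degree
  omega

theorem eq_zero_of_sq_add_mul_sub_eq_zero [CommRing K] [IsDomain K] [CharZero K]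
    {P R : K[X]} {a b : K} (ha : a ≠ 0) (hRP : R.degree < P.degree)
    (hE : C b ^ 2 + 4 * C b * (P * R) - 4 * C a * R ^ 2 = 0) :
    R = 0 ∧ b = 0 := by
  obtain rfl | hR0 := eq_or_ne R 0
  · simpa using hE
  have hRP_nat := natDegree_lt_natDegree hR0 hRP
  have hP0 : P ≠ 0 := fun h => by simp [h] at hRP
  have hb : b = 0 := by
    have hPdeg : P.natDegree ≠ 0 := by omega
    have hR2 : (R ^ 2).natDegree < P.natDegree + R.natDegree := by rw [natDegree_pow]; omega
    have := congrArg (coeff · (P.natDegree + R.natDegree)) hE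
    simp only [coeff_add, coeff_sub, mul_assoc, coeff_ofNat_mul, coeff_C_mul, ← C_pow, coeff_C,
      coeff_mul_degree_add_degree, coeff_eq_zero_of_natDegree_lt hR2, coeff_zero] at this
    simpa [hPdeg, hR0, hP0] using this
  subst hb
  simp [ha, hR0] at hE

end Polynomial

theorem stmt5_general (m : ℕ) (hm : 2 ≤ m) (P Q S R : Polynomial ℂ) (lam lam' : ℂ)
    (hlam : lam ≠ 0)
    (hPdeg : P.natDegree = m)
    (hQdeg : Q.natDegree = m - 1)
    (hfac : P ^ 2 + C lam = Q ^ 2 * S)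
    (hR : R.degree < ((m - 2 : ℕ) : WithBot ℕ))
    (hdvd : Q ∣ (2 * P * R + C lam')) :
    R = 0 ∧ lam' = 0 := by
  have hQ2 : (Q ^ 2).natDegree = 2 * (m - 1) := by rw [natDegree_pow, hQdeg]
  have hE := eq_zero_of_dvd_of_natDegree_lt (sq_dvd_of_dvd_two_mul_mul_add hfac hdvd)
    (hQ2 ▸ natDegree_sq_add_mul_sub_lt hm hPdeg hR)
  refine eq_zero_of_sq_add_mul_sub_eq_zero hlam (hR.trans_le ?_) hE
  rw [(degree_eq_iff_natDegree_eq_of_pos (by omega)).2 hPdeg]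
  exact_mod_cast Nat.sub_le m 2

/-- Let P(x) = x^m + (1/2)x^{m-2} + lower order terms over ℂ, λ ≠ 0, and suppose
P^2 + λ = Q^2 S with Q monic of degree m-1 with distinct roots and S a monic
quadratic. If deg R ≤ m-3 and Q divides 2PR + λ', then R = 0 and λ' = 0. -/
theorem stmt5 (m : ℕ) (hm : 2 ≤ m) (P Q S R : Polynomial ℂ) (lam lam' : ℂ)
    (hlam : lam ≠ 0)
    (hPmon : P.Monic) (hPdeg : P.natDegree = m) (hP1 : P.coeff (m - 1) = 0)
    (hP2 : P.coeff (m - 2) = 1 / 2)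
    (hQmon : Q.Monic) (hQdeg : Q.natDegree = m - 1) (hQsf : Squarefree Q)
    (hSmon : S.Monic) (hSdeg : S.natDegree = 2)
    (hfac : P ^ 2 + C lam = Q ^ 2 * S)
    (hR : R.degree < ((m - 2 : ℕ) : WithBot ℕ))
    (hdvd : Q ∣ (2 * P * R + C lam')) :
    R = 0 ∧ lam' = 0 :=
  stmt5_general m hm P Q S R lam lam' hlam hPdeg hQdeg hfac hR hdvd
end
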